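/- arXiv:2101.00061 — 3 statements merged into one kernel-verified Lean document; each statement's English description precedes it below -/
import Mathlib

section
/- Let $f : [n] \to \{-1, 0, 1\}$ be bounded and direction-preserving, and let $1 \leq a \leq b \leq n$ be such that $f(a) \in \{0, 1\}$ and $f(b) \in \{-1, 0\}$. Then there exists $x^* \in \{a, a+1, \ldots, b\}$ with $f(x^*) = 0$. -/
/-- Localized 1D discrete Brouwer: if `f(a) ∈ {0,1}` and `f(b) ∈ {-1,0}` with
`a ≤ b`, then `f` has a zero in `{a, ..., b}`. -/
theorem stmt3 (n : ℕ) (f : ℤ → ℤ) (a b : ℤ)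
    (ha : 1 ≤ a) (hab : a ≤ b) (hbn : b ≤ (n : ℤ))
    (hrange : ∀ x, 1 ≤ x → x ≤ (n : ℤ) → f x = -1 ∨ f x = 0 ∨ f x = 1)
    (hbounded : ∀ x, 1 ≤ x → x ≤ (n : ℤ) → 1 ≤ x + f x ∧ x + f x ≤ (n : ℤ))
    (hdp : ∀ x y, 1 ≤ x → x ≤ (n : ℤ) → 1 ≤ y → y ≤ (n : ℤ) →
      |x - y| ≤ 1 → |f x - f y| ≤ 1)
    (hfa : f a = 0 ∨ f a = 1) (hfb : f b = -1 ∨ f b = 0) :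
    ∃ x, a ≤ x ∧ x ≤ b ∧ f x = 0 := by
  obtain ⟨d, hd⟩ : ∃ d : ℕ, b = a + d := ⟨(b - a).toNat, by omega⟩
  subst hd
  induction d generalizing a with
  | zero =>
    norm_num at hfb
    exact ⟨a, le_refl _, by omega, by omega⟩
  | succ k ih =>
    rcases hfa with h0 | h1
    · exact ⟨a, le_refl _, by omega, h0⟩
    · have hdp1 := hdp (a + 1) a (by omega) (by push_cast at hbn ⊢; omega) ha (by omega)
        (by simp)
      rw [abs_le] at hdp1
      have hr := hrange (a + 1) (by omega) (by push_cast at hbn ⊢; omega)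
      have hfa1 : f (a + 1) = 0 ∨ f (a + 1) = 1 := by omega
      have heq : a + 1 + (k : ℤ) = a + ((k : ℕ) + 1 : ℕ) := by push_cast; ring
      obtain ⟨x, hx1, hx2, hx3⟩ := ih (a + 1) (by omega) hfa1 (by omega)
        (by push_cast at hbn ⊢; omega) (by rw [heq]; exact hfb)
      exact ⟨x, by omega, by push_cast at hx2 ⊢; omega, hx3⟩
end

section
/- Let $k$ be a positive integer and suppose a deterministic algorithm on inputs from $\{f_1, \ldots, f_n\}$ proceeds in $k$ rounds, issuing at most $q$ queries per round, where after each round the answers determine at most $2q+1$ possible outcomes (branches). Then the algorithm distinguishes at most $(2q+1)^k$ of the $n$ inputs; hence if it identifies the unique solution $i$ of $f_i$ with probability at least $2/3$ over a uniformly random $i \in [n]$ (and a final guess counts as correct only if it equals $i$, with the guess plus all queried points covering at most $(2q+1)^k \cdot$ (number of leaves) inputs), then $(2q+1)^k \geq \frac{2}{3} n$, so $q = \Omega(n^{1/k})$. -/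
/-- Decision-tree counting argument for the `k`-round lower bound: a
deterministic `k`-round algorithm with at most `2q+1` distinguishable answer
patterns per round induces a transcript map `T : Fin n → Fin ((2q+1)^k)` and a
guess `g` from transcripts to inputs; if it is correct on at least a `2/3`
fraction of the `n` inputs, then `(2q+1)^k ≥ (2/3) n` (whence `q = Ω(n^{1/k})`). -/
theorem stmt6 (n k q : ℕ) (hk : 1 ≤ k) (hn : 1 ≤ n)
    (T : Fin n → Fin ((2 * q + 1) ^ k)) (g : Fin ((2 * q + 1) ^ k) → Fin n)
    (hcorrect : (2 : ℝ) / 3 * n ≤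
      (Finset.univ.filter (fun i : Fin n => g (T i) = i)).card) :
    (2 : ℝ) / 3 * n ≤ ((2 * q + 1) ^ k : ℕ) := by
  refine hcorrect.trans ?_
  have hcard : (Finset.univ.filter (fun i : Fin n => g (T i) = i)).card ≤ (2 * q + 1) ^ k := by
    have hinj : Set.InjOn T (Finset.univ.filter (fun i : Fin n => g (T i) = i)) := by
      intro a ha b hb hab
      simp only [Finset.coe_filter, Set.mem_setOf_eq] at ha hb
      rw [← ha.2, ← hb.2, hab]
    calc (Finset.univ.filter (fun i : Fin n => g (T i) = i)).card
        ≤ (Finset.univ : Finset (Fin ((2 * q + 1) ^ k))).card :=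
          Finset.card_le_card_of_injOn T (fun _ _ => Finset.mem_univ _) hinj
      _ = (2 * q + 1) ^ k := by simp
  exact_mod_cast hcard
end

section
/- With notation as above (folded segments on $[m]^d$, windows $W_i(\vec{x})$ of side $\ell_i$ anchored at $\vec{x}$, and $B_i(\vec{x},\vec{y}) = \{\vec{z} \in W_i(\vec{x}) : \vec{y} \in FS(\vec{x}, \vec{z})\}$), for every fixed point $\vec{y} \in [m]^d$ the total normalized cost satisfies $\sum_{\vec{x} \in [m]^d} |B_i(\vec{x}, \vec{y})| / \ell_i^d \leq d \cdot \ell_i$. -/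
/-! If `z` lies in the window of `x` and `y` lies on the `i`-th leg of `FS(x,z)`, then `x` agrees
with `y` after coordinate `i` and lies less than `ℓ` below `y` up to it, while `z` agrees with `y`
before coordinate `i` and lies less than `ℓ` above `y` from it on. So the pairs `(x,z)` counted
through leg `i` lie in a product of two boxes with `ℓ^(i+1) · ℓ^(d-i) = ℓ^(d+1)` points, and the
`d` legs together give at most `d ℓ^(d+1)` pairs. -/

/-- The `i`-th leg `E_i(x,y)` of the folded segment from `x` to `y`. -/
def Ei (d : ℕ) (x y : Fin d → ℤ) (i : Fin d) : Set (Fin d → ℤ) :=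
  {z | (∀ t, t < i → z t = y t) ∧ (∀ t, i < t → z t = x t) ∧
    min (x i) (y i) ≤ z i ∧ z i ≤ max (x i) (y i)}

/-- The folded segment `FS(x,y) = (⋃ i, E_i(x,y)) \ {x}`. -/
def FS (d : ℕ) (x y : Fin d → ℤ) : Set (Fin d → ℤ) :=
  (⋃ i, Ei d x y i) \ {x}

open Finset

variable {d : ℕ}

def window (ℓ : ℕ) (x : Fin d → ℤ) : Set (Fin d → ℤ) :=
  {z | ∀ t, x t ≤ z t ∧ z t < x t + ℓ}

noncomputable def anchorBox (ℓ : ℕ) (y : Fin d → ℤ) (i : Fin d) : Finset (Fin d → ℤ) :=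
  Icc (fun t => if t ≤ i then y t - ℓ + 1 else y t) y

noncomputable def endBox (ℓ : ℕ) (y : Fin d → ℤ) (i : Fin d) : Finset (Fin d → ℤ) :=
  Icc y (fun t => if t < i then y t else y t + ℓ - 1)

section
variable {ℓ : ℕ} {x y z : Fin d → ℤ} {i : Fin d}

lemma mem_Ei_iff_of_le (h : x i ≤ z i) :
    y ∈ Ei d x z i ↔ (∀ t, t < i → y t = z t) ∧ (∀ t, i < t → y t = x t) ∧
      x i ≤ y i ∧ y i ≤ z i := by
  simp only [Ei, Set.mem_ofPred_eq, min_eq_left h, max_eq_right h]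

lemma mem_anchorBox_of_mem_Ei (hz : z ∈ window ℓ x) (hy : y ∈ Ei d x z i) :
    x ∈ anchorBox ℓ y i := by
  obtain ⟨hlt, hgt, hxy, hyz⟩ := (mem_Ei_iff_of_le (hz i).1).1 hy
  refine mem_Icc.2 ⟨fun t => ?_, fun t => ?_⟩ <;>
    rcases lt_trichotomy t i with h | rfl | h
  all_goals grind [window]

lemma mem_endBox_of_mem_Ei (hz : z ∈ window ℓ x) (hy : y ∈ Ei d x z i) :
    z ∈ endBox ℓ y i := by
  obtain ⟨hlt, hgt, hxy, hyz⟩ := (mem_Ei_iff_of_le (hz i).1).1 hy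
  refine mem_Icc.2 ⟨fun t => ?_, fun t => ?_⟩ <;>
    rcases lt_trichotomy t i with h | rfl | h
  all_goals grind [window]

end

lemma card_anchorBox (ℓ : ℕ) (y : Fin d → ℤ) (i : Fin d) :
    #(anchorBox ℓ y i) = ℓ ^ ((i : ℕ) + 1) := by
  have hside : ∀ t, #(Icc (if t ≤ i then y t - ℓ + 1 else y t) (y t)) =
      if t ≤ i then ℓ else 1 := by
    intro t; split_ifs <;> simp
  simp only [anchorBox, Pi.card_Icc, hside, prod_ite, prod_const, one_pow, mul_one,
    filter_ge_eq_Iic, Fin.card_Iic]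

lemma card_endBox (ℓ : ℕ) (y : Fin d → ℤ) (i : Fin d) :
    #(endBox ℓ y i) = ℓ ^ (d - i) := by
  have hside : ∀ t, #(Icc (y t) (if t < i then y t else y t + ℓ - 1)) =
      if t < i then 1 else ℓ := by
    intro t; split_ifs <;> simp
  simp only [endBox, Pi.card_Icc, hside, prod_ite, prod_const, one_pow, one_mul,
    not_lt, filter_le_eq_Ici, Fin.card_Ici]

lemma card_anchorBox_mul_card_endBox (ℓ : ℕ) (y : Fin d → ℤ) (i : Fin d) :
    #(anchorBox ℓ y i) * #(endBox ℓ y i) = ℓ ^ (d + 1) := by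
  rw [card_anchorBox, card_endBox, ← pow_add]
  congr 1
  omega

lemma ncard_window_mem_Ei_le (ℓ : ℕ) (x y : Fin d → ℤ) (i : Fin d) :
    {z ∈ window ℓ x | y ∈ Ei d x z i}.ncard ≤
      if x ∈ anchorBox ℓ y i then #(endBox ℓ y i) else 0 := by
  split_ifs with hx
  · rw [← Set.ncard_coe_finset]
    exact Set.ncard_le_ncard (fun z hz => mem_endBox_of_mem_Ei hz.1 hz.2) (finite_toSet _)
  · have hempty : {z ∈ window ℓ x | y ∈ Ei d x z i} = ∅ :=
      Set.eq_empty_of_forall_notMem fun z hz => hx (mem_anchorBox_of_mem_Ei hz.1 hz.2)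
    simp [hempty]

lemma sum_ncard_window_mem_Ei_le (ℓ : ℕ) (s : Finset (Fin d → ℤ)) (y : Fin d → ℤ) (i : Fin d) :
    ∑ x ∈ s, {z ∈ window ℓ x | y ∈ Ei d x z i}.ncard ≤ ℓ ^ (d + 1) :=
  calc _ ≤ ∑ x ∈ s, if x ∈ anchorBox ℓ y i then #(endBox ℓ y i) else 0 :=
        sum_le_sum fun x _ => ncard_window_mem_Ei_le ℓ x y i
    _ = ∑ x ∈ s ∩ anchorBox ℓ y i, #(endBox ℓ y i) := sum_ite_mem _ _ _
    _ ≤ ∑ x ∈ anchorBox ℓ y i, #(endBox ℓ y i) := sum_le_sum_of_subset inter_subset_right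
    _ = ℓ ^ (d + 1) := by rw [sum_const, smul_eq_mul, card_anchorBox_mul_card_endBox]

lemma ncard_window_mem_FS_le (p : (Fin d → ℤ) → Prop) (ℓ : ℕ) (x y : Fin d → ℤ) :
    {z | p z ∧ z ∈ window ℓ x ∧ y ∈ FS d x z}.ncard ≤
      ∑ i, {z ∈ window ℓ x | y ∈ Ei d x z i}.ncard := by
  have hsub : {z | p z ∧ z ∈ window ℓ x ∧ y ∈ FS d x z} ⊆
      ⋃ i, {z ∈ window ℓ x | y ∈ Ei d x z i} := fun z ⟨_, hw, hFS⟩ =>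
    Set.mem_iUnion.2 ((Set.mem_iUnion.1 hFS.1).imp fun _ hi => ⟨hw, hi⟩)
  have hfin : (⋃ i, {z ∈ window ℓ x | y ∈ Ei d x z i}).Finite :=
    Set.finite_iUnion fun i =>
      (endBox ℓ y i).finite_toSet.subset fun _ hz => mem_endBox_of_mem_Ei hz.1 hz.2
  exact (Set.ncard_le_ncard hsub hfin).trans (Set.ncard_iUnion_le_of_fintype _)

lemma sum_ncard_window_mem_FS_le (p : (Fin d → ℤ) → Prop) (ℓ : ℕ) (s : Finset (Fin d → ℤ))
    (y : Fin d → ℤ) :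
    ∑ x ∈ s, {z | p z ∧ z ∈ window ℓ x ∧ y ∈ FS d x z}.ncard ≤ d * ℓ ^ (d + 1) :=
  calc _ ≤ ∑ x ∈ s, ∑ i, {z ∈ window ℓ x | y ∈ Ei d x z i}.ncard :=
        sum_le_sum fun x _ => ncard_window_mem_FS_le p ℓ x y
    _ = ∑ i, ∑ x ∈ s, {z ∈ window ℓ x | y ∈ Ei d x z i}.ncard := sum_comm
    _ ≤ ∑ _i : Fin d, ℓ ^ (d + 1) := sum_le_sum fun i _ => sum_ncard_window_mem_Ei_le ℓ s y i
    _ = d * ℓ ^ (d + 1) := by simp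

theorem stmt9_general (d m ℓ : ℕ) (y : Fin d → ℤ) :
    ∑ x ∈ Finset.Icc (fun _ => (1 : ℤ)) (fun _ => (m : ℤ)),
      ((Set.ncard {z : Fin d → ℤ | (∀ t, 1 ≤ z t ∧ z t ≤ (m : ℤ)) ∧
          (∀ t, x t ≤ z t ∧ z t < x t + ℓ) ∧ y ∈ FS d x z} : ℝ) / (ℓ : ℝ) ^ d)
      ≤ (d : ℝ) * ℓ := by
  rw [← Finset.sum_div]
  refine div_le_of_le_mul₀ (by positivity) (by positivity) ?_
  calc _ ≤ ((d * ℓ ^ (d + 1) : ℕ) : ℝ) := by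
        exact_mod_cast sum_ncard_window_mem_FS_le _ ℓ _ y
    _ = d * ℓ * ℓ ^ d := by push_cast; ring

/-- Total normalized cost of a single queried point `y`:
`∑_{x ∈ [m]^d} |B(x,y)| / ℓ^d ≤ d ℓ`, where
`B(x,y) = {z ∈ W(x) : y ∈ FS(x,z)}` and `W(x)` is the window of side `ℓ`
anchored at `x` (intersected with the grid `[m]^d`). -/
theorem stmt9 (d m ℓ : ℕ) (hd : 1 ≤ d) (hm : 1 ≤ m) (hℓ : 1 ≤ ℓ)
    (y : Fin d → ℤ) (hy : ∀ t, 1 ≤ y t ∧ y t ≤ (m : ℤ)) :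
    ∑ x ∈ Finset.Icc (fun _ => (1 : ℤ)) (fun _ => (m : ℤ)),
      ((Set.ncard {z : Fin d → ℤ | (∀ t, 1 ≤ z t ∧ z t ≤ (m : ℤ)) ∧
          (∀ t, x t ≤ z t ∧ z t < x t + ℓ) ∧ y ∈ FS d x z} : ℝ) / (ℓ : ℝ) ^ d)
      ≤ (d : ℝ) * ℓ :=
  stmt9_general d m ℓ y
end
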